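/- Let π ∈ S_n and D ⊆ [n−1] with ls_D(π) ≠ 0 and D ≠ ∅. Suppose 1 ∈ D, let m be the smallest positive integer with m+1 ∉ D, and let k be the smallest index such that the longest decreasing subsequence of the prefix π_{[1,k]} has length m+1. Let D' = {i − m : i ∈ D, i > m}. Then ls_D(π) = m + ls_{D'}(π_{[k,n]}). -/

import Mathlib

open List Finset

variable {α : Type*}

/-- The (1-based) descent set of a finite sequence, as a `Finset ℕ`. -/
def desSet [LinearOrder α] [Inhabited α] (l : List α) : Finset ℕ :=
  (Finset.Icc 1 (l.length - 1)).filter (fun i => l.getD i default < l.getD (i - 1) default)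

/-- The number of descents of a finite sequence. -/
def desNum [LinearOrder α] [Inhabited α] (l : List α) : ℕ := (desSet l).card

/-- The number of ascents of a finite sequence. -/
def ascNum [LinearOrder α] [Inhabited α] (l : List α) : ℕ :=
  ((Finset.Icc 1 (l.length - 1)).filter (fun i => l.getD (i - 1) default < l.getD i default)).card

/-- `lsd w d` : the maximum length of a subsequence of `w` with exactly `d` descents
(`0` if there is none). -/
noncomputable def lsd [LinearOrder α] [Inhabited α] (w : List α) (d : ℕ) : ℕ :=
  sSup {m | ∃ s : List α, s.Sublist w ∧ desNum s = d ∧ s.length = m}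

/-- `lsD w D` : the maximum length of a subsequence of `w` whose descent set is exactly `D`
(`0` if there is none). -/
noncomputable def lsD [LinearOrder α] [Inhabited α] (w : List α) (D : Finset ℕ) : ℕ :=
  sSup {m | ∃ s : List α, s.Sublist w ∧ desSet s = D ∧ s.length = m}

/-- The length of a longest (strictly) increasing subsequence. -/
noncomputable def lis [LinearOrder α] (w : List α) : ℕ :=
  sSup {m | ∃ s : List α, s.Sublist w ∧ s.Pairwise (· < ·) ∧ s.length = m}

/-- The length of a longest (strictly) decreasing subsequence. -/
noncomputable def lds [LinearOrder α] (w : List α) : ℕ :=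
  sSup {m | ∃ s : List α, s.Sublist w ∧ s.Pairwise (· > ·) ∧ s.length = m}

/-- The one-line notation word of a permutation of `Fin n` (with values in `ℕ`). -/
def word {n : ℕ} (π : Equiv.Perm (Fin n)) : List ℕ := List.ofFn (fun i => (π i : ℕ))

/-- The factor `w_{[a, b]}` of a word `w` (positions `a` through `b`, 1-based). -/
def factor (w : List α) (a b : ℕ) : List α := (w.drop (a - 1)).take (b - a + 1)

/-!
Since `1, …, m ∈ D` and `m + 1 ∉ D`, a subsequence with descent set `D` starts with a decreasing
run of `m + 1` entries. The lengths `lds π_{[1,j]}` grow by at most one per step, so minimality of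
`k` means `lds π_{[1,k-1]} ≤ m`; hence that run ends at or after position `k`, and the subsequence
from its `(m+1)`-st entry on lies in `π_{[k,n]}` and has descent set `D'`.
Conversely, a longest decreasing subsequence of `π_{[1,k]}` has `m + 1` entries and ends at `π_k`.
Its first `m` entries, followed by an optimal subsequence for `D'` in `π_{[k,n]}` whose first entry
is replaced by `π_k` if larger (harmless since `1 ∉ D'`), have descent set `D`.
-/

section Decreasing

variable [LinearOrder α]

lemma bddAbove_lds_set (w : List α) :
    BddAbove {m | ∃ s : List α, s.Sublist w ∧ s.Pairwise (· > ·) ∧ s.length = m} :=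
  ⟨w.length, fun _ ⟨_, hs, _, hl⟩ => hl ▸ hs.length_le⟩

lemma List.Sublist.length_le_lds {s w : List α} (hs : s <+ w) (hdec : s.Pairwise (· > ·)) :
    s.length ≤ lds w :=
  le_csSup (bddAbove_lds_set w) ⟨s, hs, hdec, rfl⟩

lemma exists_sublist_length_eq_lds (w : List α) :
    ∃ s : List α, s <+ w ∧ s.Pairwise (· > ·) ∧ s.length = lds w :=
  Nat.sSup_mem (s := {m | ∃ s : List α, s <+ w ∧ s.Pairwise (· > ·) ∧ s.length = m})
    ⟨0, [], nil_sublist w, Pairwise.nil, rfl⟩ (bddAbove_lds_set w)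

lemma lds_le_length (w : List α) : lds w ≤ w.length := by
  obtain ⟨s, hs, -, hlen⟩ := exists_sublist_length_eq_lds w
  exact hlen ▸ hs.length_le

lemma lds_nil : lds ([] : List α) = 0 :=
  Nat.le_zero.mp (lds_le_length [])

lemma lds_mono {v w : List α} (h : v <+ w) : lds v ≤ lds w := by
  obtain ⟨s, hs, hdec, hlen⟩ := exists_sublist_length_eq_lds v
  exact hlen ▸ (hs.trans h).length_le_lds hdec

lemma lds_append_singleton_le (w : List α) (x : α) : lds (w ++ [x]) ≤ lds w + 1 := by
  obtain ⟨s, hs, hdec, hlen⟩ := exists_sublist_length_eq_lds (w ++ [x])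
  obtain ⟨s₁, s₂, rfl, h₁, h₂⟩ := sublist_append_iff.mp hs
  have := h₁.length_le_lds (hdec.sublist (sublist_append_left _ _))
  have := h₂.length_le
  simp only [length_append, length_singleton] at hlen this
  omega

lemma lds_take_succ_le (w : List α) (j : ℕ) : lds (w.take (j + 1)) ≤ lds (w.take j) + 1 := by
  rcases lt_or_ge j w.length with hj | hj
  · rw [take_add_one, getElem?_eq_getElem hj]
    exact lds_append_singleton_le _ _
  · rw [take_of_length_le hj, take_of_length_le (by omega)]
    omega

lemma exists_le_lds_take_eq {w : List α} {c t : ℕ} (h : c ≤ lds (w.take t)) :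
    ∃ j ≤ t, lds (w.take j) = c := by
  induction t with
  | zero =>
    rw [take_zero, lds_nil] at h
    exact ⟨0, le_rfl, by rw [take_zero, lds_nil]; omega⟩
  | succ t ih =>
    by_cases hc : c ≤ lds (w.take t)
    · obtain ⟨j, hj, hjc⟩ := ih hc
      exact ⟨j, by omega, hjc⟩
    · exact ⟨t + 1, le_rfl, by have := lds_take_succ_le w t; omega⟩

lemma lds_take_pred_le {w : List α} {k c : ℕ} (hk : lds (w.take k) = c + 1)
    (hmin : ∀ j, lds (w.take j) = c + 1 → k ≤ j) : lds (w.take (k - 1)) ≤ c := by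
  by_contra! h
  obtain ⟨j, hj, hjc⟩ := exists_le_lds_take_eq h
  have hkj := hmin j hjc
  obtain rfl : k = 0 := by omega
  simp [lds_nil] at hk

lemma exists_pairwise_append_getElem {w : List α} {j c : ℕ} (hj : j < w.length)
    (hc : lds (w.take (j + 1)) = c + 1) (hc' : lds (w.take j) ≤ c) :
    ∃ s : List α, s <+ w.take j ∧ s.length = c ∧ (s ++ [w[j]]).Pairwise (· > ·) := by
  obtain ⟨s, hs, hdec, hlen⟩ := exists_sublist_length_eq_lds (w.take (j + 1))
  rw [take_add_one, getElem?_eq_getElem hj, Option.toList_some] at hs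
  obtain ⟨s₁, s₂, rfl, h₁, h₂⟩ := sublist_append_iff.mp hs
  rcases sublist_singleton.mp h₂ with rfl | rfl
  · have := h₁.length_le_lds (by simpa using hdec)
    simp only [append_nil] at hlen
    omega
  · exact ⟨s₁, h₁, by simp only [length_append, length_singleton] at hlen; omega, hdec⟩

end Decreasing

lemma List.Sublist.exists_take_drop {s w : List α} (h : s <+ w) {j : ℕ} (hj : j < s.length) :
    ∃ p, s.take (j + 1) <+ w.take (p + 1) ∧ s.drop j <+ w.drop p := by
  induction h generalizing j with
  | slnil => simp at hj
  | cons a _ ih =>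
    obtain ⟨p, h₁, h₂⟩ := ih hj
    exact ⟨p + 1,
      h₁.trans ((take_sublist_take_left (by omega)).trans (sublist_cons_self _ _)), h₂⟩
  | cons_cons a h ih =>
    cases j with
    | zero => exact ⟨0, by simp, by simpa using h.cons_cons a⟩
    | succ j =>
      obtain ⟨p, h₁, h₂⟩ := ih (by simpa using hj)
      exact ⟨p + 1, by simpa using h₁, by simpa using h₂⟩

def shiftDown (D : Finset ℕ) (m : ℕ) : Finset ℕ := (D.filter (m < ·)).image (· - m)

lemma Icc_union_image_shiftDown {D : Finset ℕ} {m : ℕ} (hD₀ : 0 ∉ D)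
    (hD : Icc 1 m ⊆ D) : Icc 1 m ∪ (shiftDown D m).image (m + ·) = D := by
  ext i
  simp only [shiftDown, Finset.mem_union, Finset.mem_image, Finset.mem_filter]
  constructor
  · rintro (hi | ⟨_, ⟨j, ⟨hjD, hmj⟩, rfl⟩, rfl⟩)
    · exact hD hi
    · rwa [Nat.add_sub_cancel' hmj.le]
  · intro hiD
    rcases le_or_gt i m with him | hmi
    · have hi : i ≠ 0 := by rintro rfl; exact hD₀ hiD
      exact Or.inl (mem_Icc.mpr ⟨Nat.one_le_iff_ne_zero.mpr hi, him⟩)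
    · exact Or.inr ⟨i - m, ⟨i, ⟨hiD, hmi⟩, rfl⟩, by omega⟩

lemma one_notMem_shiftDown {D : Finset ℕ} {m : ℕ} (hm : m + 1 ∉ D) : 1 ∉ shiftDown D m := by
  simp only [shiftDown, Finset.mem_image, Finset.mem_filter, not_exists, not_and]
  rintro i ⟨hiD, hmi⟩ hi
  exact hm (by rwa [show m + 1 = i by omega])

lemma Icc_subset_of_one_mem {D : Finset ℕ} {m : ℕ} (h1 : 1 ∈ D)
    (hmin : ∀ m', 1 ≤ m' → m' + 1 ∉ D → m ≤ m') : Icc 1 m ⊆ D := by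
  intro i hi
  obtain ⟨hi₁, him⟩ := mem_Icc.mp hi
  by_contra hiD
  obtain rfl | hi₁ := hi₁.eq_or_lt
  · exact hiD h1
  · have := hmin (i - 1) (by omega) (by rwa [Nat.sub_add_cancel hi₁.le])
    omega

section Descents

variable [LinearOrder α] [Inhabited α]

lemma mem_desSet {l : List α} {i : ℕ} :
    i ∈ desSet l ↔ 1 ≤ i ∧ ∃ h : i < l.length, l[i] < l[i - 1] := by
  simp only [desSet, Finset.mem_filter, mem_Icc]
  constructor
  · rintro ⟨⟨hi, hil⟩, hlt⟩
    refine ⟨hi, by omega, ?_⟩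
    rwa [getD_eq_getElem _ _ (by omega), getD_eq_getElem _ _ (by omega)] at hlt
  · rintro ⟨hi, hil, hlt⟩
    refine ⟨⟨hi, by omega⟩, ?_⟩
    rwa [getD_eq_getElem _ _ (by omega), getD_eq_getElem _ _ (by omega)]

lemma zero_notMem_desSet (l : List α) : 0 ∉ desSet l := by
  simp [mem_desSet]

lemma desSet_drop (l : List α) (m : ℕ) : desSet (l.drop m) = shiftDown (desSet l) m := by
  ext j
  simp only [shiftDown, mem_desSet, Finset.mem_image, Finset.mem_filter, length_drop,
    getElem_drop]
  constructor
  · rintro ⟨hj, hjl, hlt⟩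
    refine ⟨m + j, ⟨⟨by omega, by omega, ?_⟩, by omega⟩, by omega⟩
    simpa [show m + (j - 1) = m + j - 1 by omega] using hlt
  · rintro ⟨i, ⟨⟨hi, hil, hlt⟩, hmi⟩, rfl⟩
    refine ⟨by omega, by omega, ?_⟩
    simpa [show m + (i - m) = i by omega, show m + (i - m - 1) = i - 1 by omega] using hlt

lemma pairwise_take_of_Icc_subset_desSet {s : List α} {m : ℕ}
    (h : Icc 1 m ⊆ desSet s) : (s.take (m + 1)).Pairwise (· > ·) := by
  refine isChain_iff_pairwise.mp (isChain_iff_getElem.mpr fun i hi => ?_)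
  simp only [length_take] at hi
  have hmem : i + 1 ∈ Icc 1 m := mem_Icc.mpr ⟨by omega, by omega⟩
  obtain ⟨-, _, hlt⟩ := mem_desSet.mp (h hmem)
  simpa using hlt

lemma desSet_append_of_pairwise {c t : List α} {b : α} (hc : c.Pairwise (· > ·))
    (hb : ∀ a ∈ c, b < a) :
    desSet (c ++ b :: t) = Icc 1 c.length ∪ (desSet (b :: t)).image (c.length + ·) := by
  ext i
  simp only [Finset.mem_union, mem_Icc, Finset.mem_image, mem_desSet]
  rcases le_or_gt i c.length with hi | hi
  · have hdes (h1 : 1 ≤ i) :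
        ∃ h : i < (c ++ b :: t).length, (c ++ b :: t)[i] < (c ++ b :: t)[i - 1] := by
      refine ⟨by simp; omega, ?_⟩
      rw [getElem_append_left (by omega : i - 1 < c.length)]
      rcases hi.eq_or_lt with rfl | hi
      · rw [getElem_append_right le_rfl]
        simpa using hb _ (getElem_mem _)
      · rw [getElem_append_left hi]
        exact pairwise_iff_getElem.mp hc _ _ _ _ (by omega)
    constructor
    · rintro ⟨h1, -⟩
      exact Or.inl ⟨h1, hi⟩
    · rintro (⟨h1, -⟩ | ⟨j, ⟨hj, -⟩, rfl⟩)
      · exact ⟨h1, hdes h1⟩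
      · omega
  · have hidx : i - 1 - c.length = i - c.length - 1 := by omega
    constructor
    · rintro ⟨-, hil, hlt⟩
      rw [getElem_append_right (by omega), getElem_append_right (by omega)] at hlt
      have hil' : i - c.length < (b :: t).length := by
        simp only [length_append, length_cons] at hil ⊢
        omega
      refine Or.inr ⟨i - c.length, ⟨by omega, hil', ?_⟩, by omega⟩
      simpa only [hidx] using hlt
    · rintro (⟨-, hic⟩ | ⟨j, ⟨hj, hjl, hlt⟩, rfl⟩)
      · omega
      refine ⟨by omega, by simp only [length_append, length_cons] at hjl ⊢; omega, ?_⟩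
      rw [getElem_append_right (by omega), getElem_append_right (by omega)]
      simpa [show c.length + j - 1 - c.length = j - 1 by omega] using hlt

lemma desSet_cons_of_le {a b : α} {t : List α} (h : 1 ∉ desSet (a :: t)) (hba : b ≤ a) :
    desSet (b :: t) = desSet (a :: t) := by
  ext i
  simp only [mem_desSet] at h ⊢
  match i with
  | 0 => simp
  | 1 =>
    simp only [le_refl, length_cons, true_and, not_exists, not_lt, getElem_cons_succ,
      Nat.sub_self, getElem_cons_zero] at h ⊢
    exact iff_of_false (fun ⟨hl, hlt⟩ => (hba.trans (h hl)).not_gt hlt)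
      (fun ⟨hl, hlt⟩ => (h hl).not_gt hlt)
  | i + 2 => simp

lemma exists_cons_sublist_cons_le {a x : α} {t v : List α}
    (hu : a :: t <+ x :: v) (h1 : 1 ∉ desSet (a :: t)) :
    ∃ b ≤ x, b :: t <+ x :: v ∧ desSet (b :: t) = desSet (a :: t) := by
  rcases le_or_gt a x with hax | hxa
  · exact ⟨a, hax, hu, rfl⟩
  · exact ⟨x, le_rfl, hu.tail.cons_cons x, desSet_cons_of_le h1 hxa.le⟩

end Descents

section LongestWithDescentSet

variable [LinearOrder α] [Inhabited α]

lemma bddAbove_lsD_set (w : List α) (D : Finset ℕ) :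
    BddAbove {m | ∃ s : List α, s.Sublist w ∧ desSet s = D ∧ s.length = m} :=
  ⟨w.length, fun _ ⟨_, hs, _, hl⟩ => hl ▸ hs.length_le⟩

lemma List.Sublist.length_le_lsD {s w : List α} (hs : s <+ w) {D : Finset ℕ}
    (hD : desSet s = D) : s.length ≤ lsD w D :=
  le_csSup (bddAbove_lsD_set w D) ⟨s, hs, hD, rfl⟩

lemma exists_sublist_length_eq_lsD {w : List α} {D : Finset ℕ} (h : lsD w D ≠ 0) :
    ∃ s : List α, s <+ w ∧ desSet s = D ∧ s.length = lsD w D := by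
  have hne : {m | ∃ s : List α, s <+ w ∧ desSet s = D ∧ s.length = m}.Nonempty := by
    by_contra hempty
    exact h (by rw [lsD, Set.not_nonempty_iff_eq_empty.mp hempty, csSup_empty]; rfl)
  exact Nat.sSup_mem hne (bddAbove_lsD_set w D)

end LongestWithDescentSet

section Main

variable [LinearOrder α] [Inhabited α] {w : List α} {D : Finset ℕ} {m k : ℕ}

lemma lsD_le_add_lsD_drop (hD : Icc 1 m ⊆ D) (hk : lds (w.take (k - 1)) ≤ m) :
    lsD w D ≤ m + lsD (w.drop (k - 1)) (shiftDown D m) := by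
  rcases eq_or_ne (lsD w D) 0 with h0 | h0
  · omega
  obtain ⟨s, hsw, hsD, hslen⟩ := exists_sublist_length_eq_lsD h0
  rcases le_or_gt s.length m with hsm | hms
  · omega
  obtain ⟨p, htake, hdrop⟩ := hsw.exists_take_drop hms
  have hchain : m + 1 ≤ lds (w.take (p + 1)) := by
    simpa [hms] using htake.length_le_lds (pairwise_take_of_Icc_subset_desSet (hsD ▸ hD))
  have hkp : k - 1 ≤ p := by
    by_contra! hpk
    have := lds_mono (take_sublist_take_left (l := w) (by omega : p + 1 ≤ k - 1))
    omega
  have := (hdrop.trans (drop_sublist_drop_left w hkp)).length_le_lsD (by rw [desSet_drop, hsD])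
  rw [length_drop] at this
  omega

lemma add_length_le_lsD {u : List α} (hD₀ : 0 ∉ D) (hD : Icc 1 m ⊆ D) (hm : m + 1 ∉ D)
    (hk : lds (w.take k) = m + 1) (hk' : lds (w.take (k - 1)) ≤ m)
    (hu : u <+ w.drop (k - 1)) (hune : u ≠ []) (huD : desSet u = shiftDown D m) :
    m + u.length ≤ lsD w D := by
  obtain ⟨j, rfl⟩ : ∃ j, k = j + 1 := ⟨k - 1, by rcases k with _ | _ <;> simp_all⟩
  rw [Nat.add_sub_cancel] at hk' hu
  have hj : j < w.length := by
    by_contra! hj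
    rw [take_of_length_le hj] at hk'
    rw [take_of_length_le (by omega)] at hk
    omega
  obtain ⟨c, hcw, hclen, hc⟩ := exists_pairwise_append_getElem hj hk hk'
  obtain ⟨a, t, rfl⟩ := exists_cons_of_ne_nil hune
  rw [drop_eq_getElem_cons hj] at hu
  obtain ⟨b, hbx, hbw, hbD⟩ := exists_cons_sublist_cons_le hu (huD ▸ one_notMem_shiftDown hm)
  have hdes : desSet (c ++ b :: t) = D := by
    have hcb : ∀ a ∈ c, b < a := fun a ha =>
      hbx.trans_lt ((pairwise_append.mp hc).2.2 a ha _ (List.mem_singleton_self _))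
    rw [desSet_append_of_pairwise (hc.sublist (sublist_append_left _ _)) hcb, hbD, huD, hclen,
      Icc_union_image_shiftDown hD₀ hD]
  have hsub : c ++ b :: t <+ w := by
    simpa [← drop_eq_getElem_cons hj] using hcw.append hbw
  simpa [hclen] using hsub.length_le_lsD hdes

theorem lsD_eq_add_lsD_drop (h0 : lsD w D ≠ 0) (hD : Icc 1 m ⊆ D) (hm : m + 1 ∉ D)
    (hk : lds (w.take k) = m + 1) (hk' : lds (w.take (k - 1)) ≤ m) :
    lsD w D = m + lsD (w.drop (k - 1)) (shiftDown D m) := by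
  obtain ⟨s, -, hsD, hslen⟩ := exists_sublist_length_eq_lsD h0
  have hD₀ : 0 ∉ D := hsD ▸ zero_notMem_desSet s
  refine le_antisymm (lsD_le_add_lsD_drop hD hk') ?_
  rcases eq_or_ne (lsD (w.drop (k - 1)) (shiftDown D m)) 0 with h | h
  · have : m ≤ s.length := by
      rcases Nat.eq_zero_or_pos m with rfl | hm₀
      · omega
      · exact (mem_desSet.mp (hsD ▸ hD (mem_Icc.mpr ⟨hm₀, le_rfl⟩))).2.1.le
    omega
  · obtain ⟨u, hu, huD, hulen⟩ := exists_sublist_length_eq_lsD h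
    have hune : u ≠ [] := by rintro rfl; exact h hulen.symm
    exact hulen ▸ add_length_le_lsD hD₀ hD hm hk hk' hu hune huD

end Main

lemma factor_one {w : List α} {j : ℕ} (hj : 1 ≤ j) : factor w 1 j = w.take j := by
  simp [factor, Nat.sub_add_cancel hj]

lemma factor_of_length_le {w : List α} {a b : ℕ} (h : w.length ≤ b) :
    factor w a b = w.drop (a - 1) :=
  take_of_length_le (by rw [length_drop]; omega)

theorem stmt15_general (n : ℕ) (π : Equiv.Perm (Fin n)) (D : Finset ℕ)
    (h0 : lsD (word π) D ≠ 0)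
    (h1 : 1 ∈ D) (m : ℕ) (hm : m + 1 ∉ D)
    (hmmin : ∀ m' : ℕ, 1 ≤ m' → m' + 1 ∉ D → m ≤ m')
    (k : ℕ) (hk : lds (factor (word π) 1 k) = m + 1)
    (hkmin : ∀ k' : ℕ, lds (factor (word π) 1 k') = m + 1 → k ≤ k') :
    lsD (word π) D =
      m + lsD (factor (word π) k n) ((D.filter (fun i => m < i)).image (fun i => i - m)) := by
  have hm₀ : m ≠ 0 := by rintro rfl; exact hm h1
  have hk₁ : 1 ≤ k := by
    by_contra! hk₀
    have hlen : (factor (word π) 1 k).length ≤ 1 := by simp [factor, show k = 0 by omega]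
    have := hk ▸ lds_le_length (factor (word π) 1 k)
    omega
  have hkmin' : ∀ j, lds ((word π).take j) = m + 1 → k ≤ j := fun j hj =>
    hkmin j (by
      rcases Nat.eq_zero_or_pos j with rfl | hj₁
      · simp [lds_nil] at hj
      · rwa [factor_one hj₁])
  rw [factor_one hk₁] at hk
  rw [factor_of_length_le (by simp [word])]
  exact lsD_eq_add_lsD_drop h0 (Icc_subset_of_one_mem h1 hmmin) hm hk (lds_take_pred_le hk hkmin')

theorem stmt15 (n : ℕ) (π : Equiv.Perm (Fin n)) (D : Finset ℕ)
    (hDsub : D ⊆ Finset.Icc 1 (n - 1)) (h0 : lsD (word π) D ≠ 0)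
    (h1 : 1 ∈ D) (m : ℕ) (hm1 : 1 ≤ m) (hm : m + 1 ∉ D)
    (hmmin : ∀ m' : ℕ, 1 ≤ m' → m' + 1 ∉ D → m ≤ m')
    (k : ℕ) (hk : lds (factor (word π) 1 k) = m + 1)
    (hkmin : ∀ k' : ℕ, lds (factor (word π) 1 k') = m + 1 → k ≤ k') :
    lsD (word π) D =
      m + lsD (factor (word π) k n) ((D.filter (fun i => m < i)).image (fun i => i - m)) :=
  stmt15_general n π D h0 h1 m hm hmmin k hk hkmin
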